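/- Let G be a finite weighted directed graph, all whose cycles pass through e = (u,v), and let C_1, ..., C_k be the cycles recorded by the iterative process, ordered with increasing maximum edge weight. Then γ(C_1) ≤ γ(C_2) ≤ ... ≤ γ(C_k) does not necessarily hold, but: for any cycle C of G with M(C_i) < M(C) < M(C_{i+1}), we have γ(C) ≤ γ(C_i). -/

import Mathlib

/-- A directed multigraph: edges `E` with source and target vertices in `V`. -/
structure MultiDigraph (V : Type) (E : Type) where
  src : E → V
  tgt : E → V

namespace MultiDigraph

variable {V E : Type}

/-- `G.IsWalk v u l` : the list of edges `l` forms a directed walk from `v` to `u`. -/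
def IsWalk (G : MultiDigraph V E) : V → V → List E → Prop
  | v, u, [] => v = u
  | v, u, e :: l => G.src e = v ∧ G.IsWalk (G.tgt e) u l

/-- A (directed) cycle: a nonempty closed walk. -/
def IsCycle (G : MultiDigraph V E) (l : List E) : Prop :=
  l ≠ [] ∧ ∃ x, G.IsWalk x x l

/-- minimum edge weight (critical edge value γ) along a nonempty list of edges. -/
noncomputable def minW (w : E → ℝ) (l : List E) : ℝ := ((l.map w).min?).getD 0

/-- maximum edge weight M along a nonempty list of edges. -/
noncomputable def maxW (w : E → ℝ) (l : List E) : ℝ := ((l.map w).max?).getD 0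

/-- flow value φ = M − γ. -/
noncomputable def flowVal (w : E → ℝ) (l : List E) : ℝ := maxW w l - minW w l

end MultiDigraph

namespace MultiDigraph

variable {V E : Type}

/-- The edges of `l` all lie in the edge set `F`. -/
def EdgesIn (l : List E) (F : Finset E) : Prop := ∀ f ∈ l, f ∈ F

/-- `P` is a maxflow path from `v` to `u` using only edges of `F`. -/
def IsMaxflowPathIn (G : MultiDigraph V E) (w : E → ℝ) (v u : V) (F : Finset E)
    (P : List E) : Prop :=
  G.IsWalk v u P ∧ P ≠ [] ∧ EdgesIn P F ∧
    ∀ Q, G.IsWalk v u Q → Q ≠ [] → EdgesIn Q F → minW w Q ≤ minW w P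

/-- `ProcessRun G w e u v k Es Ps`: the iterative process of Algorithm 2.
Starting from the whole graph (`Es 0 = univ`), at each step `i < k` the list
`Ps i` is a maxflow path from `v` to `u` in the current edge set `Es i`, the
cycle `Ps i ++ [e]` is recorded, and every edge other than `e` of weight
`≥ M(Ps i)` is deleted to form `Es (i+1)`. -/
def ProcessRun [Fintype E] (G : MultiDigraph V E) (w : E → ℝ) (e : E) (u v : V)
    (k : ℕ) (Es : ℕ → Finset E) (Ps : ℕ → List E) : Prop :=
  Es 0 = Finset.univ ∧
  ∀ i < k,
    G.IsMaxflowPathIn w v u (Es i) (Ps i) ∧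
    ((Es (i+1) : Set E) = {f ∈ (Es i : Set E) | ¬ (maxW w (Ps i) ≤ w f ∧ f ≠ e)})

/-- There is a cycle all of whose edges lie in `F`. -/
def HasCycleIn (G : MultiDigraph V E) (F : Finset E) : Prop :=
  ∃ C, G.IsCycle C ∧ EdgesIn C F

end MultiDigraph

/-!
The maxima of the recorded cycles are non-increasing along the run, so every edge of `C`
weighs at most `M(C) < M(C_{i+1})`, which is below the maximum of every path recorded before
`C_i`; hence `C` survives all deletions preceding the choice of `C_i = P ∪ {e}`. Cutting `C`
open at `e` gives a path `Q` from `v` to `u` in the edge set from which the maxflow path `P` was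
chosen, so `γ(C) ≤ γ(Q) ≤ γ(P)`; together with `γ(C) ≤ w e` this is `γ(C) ≤ γ(C_i)`.
-/

namespace MultiDigraph

variable {V E : Type}

section Weights

variable {w : E → ℝ} {l : List E} {f : E}

lemma map_max?_eq_maxW (hl : l ≠ []) : (l.map w).max? = some (maxW w l) := by
  rcases h : (l.map w).max? with _ | m
  · simp_all
  · simp [maxW, h]

lemma map_min?_eq_minW (hl : l ≠ []) : (l.map w).min? = some (minW w l) := by
  rcases h : (l.map w).min? with _ | m
  · simp_all
  · simp [minW, h]

lemma maxW_le_iff (hl : l ≠ []) {c : ℝ} : maxW w l ≤ c ↔ ∀ f ∈ l, w f ≤ c := by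
  simp [List.max?_le_iff (map_max?_eq_maxW hl)]

lemma le_minW_iff (hl : l ≠ []) {c : ℝ} : c ≤ minW w l ↔ ∀ f ∈ l, c ≤ w f := by
  simp [List.le_min?_iff (map_min?_eq_minW hl)]

lemma le_maxW_of_mem (hf : f ∈ l) : w f ≤ maxW w l :=
  (maxW_le_iff (List.ne_nil_of_mem hf)).1 le_rfl f hf

lemma minW_le_of_mem (hf : f ∈ l) : minW w l ≤ w f :=
  (le_minW_iff (List.ne_nil_of_mem hf)).1 le_rfl f hf

lemma minW_le_minW_of_subset {l' : List E} (hl : l ≠ []) (h : l ⊆ l') :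
    minW w l' ≤ minW w l :=
  (le_minW_iff hl).2 fun _ hf => minW_le_of_mem (h hf)

lemma maxW_append_singleton (hl : l ≠ []) : maxW w (l ++ [f]) = max (maxW w l) (w f) :=
  eq_of_forall_ge_iff fun c => by simp [maxW_le_iff, hl, or_imp, forall_and]

lemma minW_append_singleton (hl : l ≠ []) : minW w (l ++ [f]) = min (minW w l) (w f) :=
  eq_of_forall_le_iff fun c => by simp [le_minW_iff, hl, or_imp, forall_and]

end Weights

section Walks

variable {G : MultiDigraph V E}

lemma isWalk_append {x y : V} {p q : List E} :
    G.IsWalk x y (p ++ q) ↔ ∃ m, G.IsWalk x m p ∧ G.IsWalk m y q := by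
  induction p generalizing x with
  | nil => exact ⟨fun h => ⟨x, rfl, h⟩, fun ⟨_, hm, h⟩ => hm ▸ h⟩
  | cons f p ih => simp only [List.cons_append, IsWalk, ih]; grind

lemma IsCycle.exists_walk_tgt_src {C : List E} {f : E} (hC : G.IsCycle C) (hf : f ∈ C) :
    ∃ Q, G.IsWalk (G.tgt f) (G.src f) Q ∧ C.Perm (f :: Q) := by
  obtain ⟨-, x, hwalk⟩ := hC
  obtain ⟨l₁, l₂, rfl⟩ := List.append_of_mem hf
  obtain ⟨m, hl₁, hm, hl₂⟩ := isWalk_append.1 hwalk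
  refine ⟨l₂ ++ l₁, isWalk_append.2 ⟨x, hl₂, hm ▸ hl₁⟩, ?_⟩
  exact List.perm_middle.trans (List.perm_append_comm.cons f)

end Walks

section Run

variable [Fintype E] {G : MultiDigraph V E} {w : E → ℝ} {e : E} {u v : V} {k : ℕ}
  {Es : ℕ → Finset E} {Ps : ℕ → List E}

lemma ProcessRun.mem_succ_iff (hrun : G.ProcessRun w e u v k Es Ps) {i : ℕ} (hi : i < k)
    {f : E} : f ∈ Es (i + 1) ↔ f ∈ Es i ∧ (w f < maxW w (Ps i) ∨ f = e) := by
  have h := congrArg (f ∈ ·) (hrun.2 i hi).2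
  simp only [Finset.mem_coe, Set.mem_ofPred_eq, eq_iff_iff] at h
  rw [h, not_and_or, not_le, not_ne_iff]

lemma ProcessRun.edgesIn_of_maxW_lt (hrun : G.ProcessRun w e u v k Es Ps) {l : List E}
    {j : ℕ} (hj : j ≤ k) (hl : ∀ i < j, maxW w l < maxW w (Ps i)) : EdgesIn l (Es j) := by
  induction j with
  | zero => intro f _; simp [hrun.1]
  | succ j ih =>
    intro f hf
    refine (hrun.mem_succ_iff hj).2 ⟨ih (by omega) (fun i hi => hl i (by omega)) f hf, ?_⟩
    exact Or.inl ((le_maxW_of_mem hf).trans_lt (hl j j.lt_succ_self))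

lemma ProcessRun.maxW_cycle_succ_le (hrun : G.ProcessRun w e u v k Es Ps) {j : ℕ}
    (hj : j + 1 < k) : maxW w (Ps (j + 1) ++ [e]) ≤ maxW w (Ps j ++ [e]) := by
  obtain ⟨-, hne, hin, -⟩ := (hrun.2 (j + 1) hj).1
  rw [maxW_append_singleton hne, maxW_append_singleton (hrun.2 j (by omega)).1.2.1]
  refine max_le ((maxW_le_iff hne).2 fun f hf => ?_) (le_max_right _ _)
  rcases ((hrun.mem_succ_iff (by omega)).1 (hin f hf)).2 with hlt | rfl
  · exact le_max_of_le_left hlt.le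
  · exact le_max_right _ _

lemma ProcessRun.maxW_cycle_antitone (hrun : G.ProcessRun w e u v k Es Ps) {i j : ℕ}
    (hij : i ≤ j) (hj : j < k) : maxW w (Ps j ++ [e]) ≤ maxW w (Ps i ++ [e]) := by
  induction j, hij using Nat.le_induction with
  | base => exact le_rfl
  | succ j _ ih => exact (hrun.maxW_cycle_succ_le hj).trans (ih (by omega))

lemma ProcessRun.lt_maxW_path (hrun : G.ProcessRun w e u v k Es Ps) {a j : ℕ} (ha : a < k)
    (hja : j ≤ a) {c : ℝ} (hec : w e ≤ c) (hc : c < maxW w (Ps a ++ [e])) :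
    c < maxW w (Ps j) := by
  have h := hc.trans_le (hrun.maxW_cycle_antitone hja ha)
  rw [maxW_append_singleton (hrun.2 j (by omega)).1.2.1, lt_max_iff] at h
  exact h.resolve_right hec.not_gt

end Run

end MultiDigraph

open MultiDigraph in
/-- The process records cycles in decreasing order of maximum, so `Ps (a+1) ++ [e]` is `C_i`
and `Ps a ++ [e]` is `C_{i+1}`. -/
theorem stmt_14_general {V E : Type} [Fintype E]
    (G : MultiDigraph V E) (w : E → ℝ) (e : E) (u v : V)
    (hsrc : G.src e = u) (htgt : G.tgt e = v)
    (hall : ∀ l, G.IsCycle l → e ∈ l)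
    (k : ℕ) (Es : ℕ → Finset E) (Ps : ℕ → List E)
    (hrun : G.ProcessRun w e u v k Es Ps) :
    ∀ a, a + 1 < k → ∀ C, G.IsCycle C →
      maxW w (Ps (a+1) ++ [e]) < maxW w C →
      maxW w C < maxW w (Ps a ++ [e]) →
      minW w C ≤ minW w (Ps (a+1) ++ [e]) := by
  intro a ha C hC hlo hhi
  have heC : e ∈ C := hall C hC
  have hCin : EdgesIn C (Es (a + 1)) := hrun.edgesIn_of_maxW_lt ha.le fun j hj =>
    hrun.lt_maxW_path (by omega) (by omega) (le_maxW_of_mem heC) hhi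
  obtain ⟨Q, hQ, hCQ⟩ := hC.exists_walk_tgt_src heC
  rw [hsrc, htgt] at hQ
  have hQne : Q ≠ [] := by
    rintro rfl
    rw [List.perm_singleton.1 hCQ] at hlo
    exact (le_maxW_of_mem (List.mem_append_right _ (List.mem_singleton_self e))).not_gt hlo
  have hQC : Q ⊆ C := fun f hf => hCQ.symm.subset (List.mem_cons_of_mem e hf)
  obtain ⟨-, hPne, -, hmax⟩ := (hrun.2 (a + 1) ha).1
  rw [minW_append_singleton hPne]
  exact le_min ((minW_le_minW_of_subset hQne hQC).trans
    (hmax Q hQ hQne fun f hf => hCin f (hQC hf))) (minW_le_of_mem heC)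

open MultiDigraph in
/-- for consecutive recorded cycles (the process records them in
decreasing order of maximum edge weight, so `Ps (a+1) ++ [e]` is the cycle
`C_i` with the smaller maximum and `Ps a ++ [e]` is `C_{i+1}`), every cycle C
of G whose maximum edge weight lies strictly between theirs satisfies
γ(C) ≤ γ(C_i). -/
theorem stmt_14 {V E : Type} [Fintype E] [DecidableEq E]
    (G : MultiDigraph V E) (w : E → ℝ) (e : E) (u v : V)
    (hsrc : G.src e = u) (htgt : G.tgt e = v)
    (hall : ∀ l, G.IsCycle l → e ∈ l)
    (k : ℕ) (Es : ℕ → Finset E) (Ps : ℕ → List E)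
    (hrun : G.ProcessRun w e u v k Es Ps)
    (hterm : ¬ G.HasCycleIn (Es k)) :
    ∀ a, a + 1 < k → ∀ C, G.IsCycle C →
      maxW w (Ps (a+1) ++ [e]) < maxW w C →
      maxW w C < maxW w (Ps a ++ [e]) →
      minW w C ≤ minW w (Ps (a+1) ++ [e]) :=
  stmt_14_general G w e u v hsrc htgt hall k Es Ps hrun
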